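/- arXiv:2008.00724 — 5 statements merged into one kernel-verified Lean document; each statement's English description precedes it below -/
import Mathlib

section
/- For monotone increasing functions f and g on a complete lattice, the closure of their pointwise join equals the closure of their composition: (f + g)* = (f ∘ g)* = (g ∘ f)*, where (f+g)(X) = f(X) ⊔ g(X) and h* denotes the operation of closing under h (the least fixedpoint of h above the argument). -/
/-- The least fixedpoint of `f` that is above `X` (for monotone increasing `f`
on a complete lattice, this infimum is itself a fixedpoint, so it is the least
fixedpoint of `f` that is ≥ `X`). -/
def lfpAbove {α : Type*} [CompleteLattice α] (f : α → α) (X : α) : α :=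
  sInf {Y | f Y = Y ∧ X ≤ Y}

theorem stmt_4 {α : Type*} [CompleteLattice α] (f g : α → α)
    (hf : Monotone f) (hg : Monotone g)
    (hfi : ∀ X : α, X ≤ f X) (hgi : ∀ X : α, X ≤ g X) :
    lfpAbove (fun X => f X ⊔ g X) = lfpAbove (f ∘ g) ∧
    lfpAbove (f ∘ g) = lfpAbove (g ∘ f) := by
  have comp : ∀ (h k : α → α), (∀ X, X ≤ h X) → (∀ X, X ≤ k X) →
      ∀ Y : α, (h (k Y) = Y ↔ h Y = Y ∧ k Y = Y) := by
    intro h k hh hk Y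
    constructor
    · intro e
      have hkY : k Y = Y := le_antisymm (le_trans (hh (k Y)) e.le) (hk Y)
      rw [hkY] at e
      exact ⟨e, hkY⟩
    · rintro ⟨h1, h2⟩; rw [h2, h1]
  have esup : ∀ Y : α, (f Y ⊔ g Y = Y ↔ f Y = Y ∧ g Y = Y) := by
    intro Y
    constructor
    · intro e
      obtain ⟨h1, h2⟩ := sup_le_iff.mp e.le
      exact ⟨le_antisymm h1 (hfi Y), le_antisymm h2 (hgi Y)⟩
    · rintro ⟨h1, h2⟩; rw [h1, h2, sup_idem]
  have key : ∀ (h k : α → α), (∀ Y : α, h Y = Y ↔ k Y = Y) →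
      lfpAbove h = lfpAbove k := by
    intro h k hhk
    funext X
    unfold lfpAbove
    congr 1
    ext Y
    simp only [Set.mem_setOf_eq, hhk]
  constructor
  · exact key _ _ (fun Y => (esup Y).trans (comp f g hfi hgi Y).symm)
  · exact key _ _ (fun Y => (comp f g hfi hgi Y).trans
      ((and_comm).trans (comp g f hgi hfi Y).symm))
end

section
/- Let f and g be monotone increasing functions on a complete lattice. If f* ∘ g ≥ g ∘ f* pointwise, then (f + g)* = f* ∘ g*, where h* denotes the closure operation (least fixedpoint above the argument). -/
theorem stmt_5 {α : Type*} [CompleteLattice α] (f g : α → α)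
    (hf : Monotone f) (hg : Monotone g)
    (hfi : ∀ X : α, X ≤ f X) (hgi : ∀ X : α, X ≤ g X)
    (hcomm : ∀ X : α, g (lfpAbove f X) ≤ lfpAbove f (g X)) :
    lfpAbove (fun X => f X ⊔ g X) = fun X => lfpAbove f (lfpAbove g X) := by
  have key : ∀ (h : α → α), Monotone h → (∀ X : α, X ≤ h X) → ∀ X : α,
      h (lfpAbove h X) = lfpAbove h X ∧ X ≤ lfpAbove h X := by
    intro h hm hi X
    have hle : h (sInf {Y | h Y = Y ∧ X ≤ Y}) ≤ sInf {Y | h Y = Y ∧ X ≤ Y} := by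
      apply le_sInf
      intro Y hY
      calc h (sInf {Y | h Y = Y ∧ X ≤ Y}) ≤ h Y := hm (sInf_le hY)
        _ = Y := hY.1
    refine ⟨le_antisymm hle (hi _), le_sInf fun Y hY => hY.2⟩
  have hfix := fun X => (key f hf hfi X).1
  have hab := fun X => (key f hf hfi X).2
  have gfix := fun X => (key g hg hgi X).1
  have gab := fun X => (key g hg hgi X).2
  funext X
  apply le_antisymm
  · -- lfpAbove (f ⊔ g) X ≤ f* (g* X)
    apply sInf_le
    constructor
    · have hgfix : g (lfpAbove f (lfpAbove g X)) ≤ lfpAbove f (lfpAbove g X) := by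
        calc g (lfpAbove f (lfpAbove g X)) ≤ lfpAbove f (g (lfpAbove g X)) := hcomm _
          _ = lfpAbove f (lfpAbove g X) := by rw [gfix X]
      exact le_antisymm (sup_le (le_of_eq (hfix _)) hgfix) (le_trans (hfi _) le_sup_left)
    · exact le_trans (gab X) (hab _)
  · -- f* (g* X) ≤ lfpAbove (f ⊔ g) X
    set L := lfpAbove (fun X => f X ⊔ g X) X with hL
    have hLfix : f L ⊔ g L = L := key _ (fun a b hab => sup_le_sup (hf hab) (hg hab))
      (fun Y => le_trans (hfi Y) le_sup_left) X |>.1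
    have hXL : X ≤ L := key _ (fun a b hab => sup_le_sup (hf hab) (hg hab))
      (fun Y => le_trans (hfi Y) le_sup_left) X |>.2
    have hfL : f L = L := le_antisymm (le_trans le_sup_left hLfix.le) (hfi L)
    have hgL : g L = L := le_antisymm (le_trans le_sup_right hLfix.le) (hgi L)
    have hgstar : lfpAbove g X ≤ L := sInf_le ⟨hgL, hXL⟩
    exact sInf_le ⟨hfL, hgstar⟩
end

section
/- Let f and g be monotone increasing functions on a complete lattice with g continuous (preserving suprema of chains). If f ∘ g ≥ g ∘ f pointwise, then for every ordinal β, g ∘ f^β ≤ f^β ∘ g pointwise, and consequently g ∘ f* ≤ f* ∘ g, so (f + g)* = f* ∘ g*. -/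
/-- `g` is continuous: it preserves suprema of (nonempty) chains. -/
def ChainContinuous {α : Type*} [CompleteLattice α] (g : α → α) : Prop :=
  ∀ s : Set α, IsChain (· ≤ ·) s → s.Nonempty → g (sSup s) = sSup (g '' s)

/-- Transfinite iterates of `f` starting from `X`. -/
noncomputable def iterOrd {α : Type*} [CompleteLattice α] (f : α → α) (X : α)
    (o : Ordinal) : α :=
  Ordinal.limitRecOn o X (fun _ ih => f ih)
    (fun o _ ih => ⨆ b : {b : Ordinal // b < o}, ih b b.2)

universe u

section Aux

variable {α : Type*} [CompleteLattice α] {f g : α → α}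

@[simp] lemma iterOrd_zero (f : α → α) (X : α) : iterOrd f X 0 = X :=
  Ordinal.limitRecOn_zero _ _ _

@[simp] lemma iterOrd_succ (f : α → α) (X : α) (b : Ordinal) :
    iterOrd f X (Order.succ b) = f (iterOrd f X b) :=
  Ordinal.limitRecOn_succ _ _ _ _

lemma iterOrd_limit (f : α → α) (X : α) {o : Ordinal} (ho : Order.IsSuccLimit o) :
    iterOrd f X o = ⨆ b : {b : Ordinal // b < o}, iterOrd f X b :=
  Ordinal.limitRecOn_limit _ _ _ _ ho

lemma iterOrd_mono (hfi : ∀ X : α, X ≤ f X) (X : α) :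
    Monotone (iterOrd f X) := by
  intro b c h
  induction c using Ordinal.limitRecOn with
  | zero => rw [nonpos_iff_eq_zero.mp h]
  | add_one d ih =>
    rw [Ordinal.add_one_eq_succ] at *
    rcases eq_or_lt_of_le h with rfl | h'
    · rfl
    · have : b ≤ d := Order.lt_succ_iff.mp h'
      calc iterOrd f X b ≤ iterOrd f X d := ih this
        _ ≤ f (iterOrd f X d) := hfi _
        _ = iterOrd f X (Order.succ d) := (iterOrd_succ f X d).symm
  | limit o ho ih =>
    rcases eq_or_lt_of_le h with rfl | h'
    · rfl
    · rw [iterOrd_limit f X ho]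
      exact le_iSup (fun b : {b : Ordinal // b < o} => iterOrd f X b) ⟨b, h'⟩

lemma iterOrd_le (hf : Monotone f) {X Z : α} (hXZ : X ≤ Z) (hZ : f Z ≤ Z)
    (b : Ordinal) : iterOrd f X b ≤ Z := by
  induction b using Ordinal.limitRecOn with
  | zero => simpa using hXZ
  | add_one d ih =>
    rw [Ordinal.add_one_eq_succ] at *
    rw [iterOrd_succ]
    exact (hf ih).trans hZ
  | limit o ho ih =>
    rw [iterOrd_limit f X ho]
    exact iSup_le fun b => ih b b.2

lemma lfpAbove_le (hf : Monotone f) (hfi : ∀ X : α, X ≤ f X) {X Z : α}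
    (hXZ : X ≤ Z) (hZ : f Z ≤ Z) : lfpAbove f X ≤ Z := by
  -- first show the least prefixedpoint above X is a fixedpoint
  set m := sInf {Y | f Y ≤ Y ∧ X ≤ Y} with hm
  have hXm : X ≤ m := le_sInf fun Y hY => hY.2
  have hfm : f m ≤ m := le_sInf fun Y hY =>
    (hf (sInf_le hY)).trans hY.1
  have hmem : f m ∈ {Y | f Y ≤ Y ∧ X ≤ Y} :=
    ⟨hf hfm, (hfi X).trans (hf hXm)⟩
  have hfix : f m = m := le_antisymm hfm (sInf_le hmem)
  have h1 : lfpAbove f X ≤ m := sInf_le ⟨hfix, hXm⟩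
  exact h1.trans (sInf_le ⟨hZ, hXZ⟩)

lemma lfpAbove_fixed (hf : Monotone f) (hfi : ∀ X : α, X ≤ f X) (X : α) :
    f (lfpAbove f X) = lfpAbove f X ∧ X ≤ lfpAbove f X := by
  set m := sInf {Y | f Y ≤ Y ∧ X ≤ Y} with hm
  have hXm : X ≤ m := le_sInf fun Y hY => hY.2
  have hfm : f m ≤ m := le_sInf fun Y hY =>
    (hf (sInf_le hY)).trans hY.1
  have hmem : f m ∈ {Y | f Y ≤ Y ∧ X ≤ Y} :=
    ⟨hf hfm, (hfi X).trans (hf hXm)⟩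
  have hfix : f m = m := le_antisymm hfm (sInf_le hmem)
  have h1 : lfpAbove f X ≤ m := sInf_le ⟨hfix, hXm⟩
  have h2 : m ≤ lfpAbove f X := le_sInf fun Y hY => sInf_le ⟨hY.1.le, hY.2⟩
  have he : lfpAbove f X = m := le_antisymm h1 h2
  rw [he]
  exact ⟨hfix, hXm⟩

/-- The transfinite iteration eventually reaches the least fixedpoint. -/
lemma exists_iterOrd_eq_lfpAbove {α : Type u} [CompleteLattice α] {f : α → α}
    (hf : Monotone f) (hfi : ∀ X : α, X ≤ f X)
    (X : α) : ∃ b : Ordinal.{u}, iterOrd f X b = lfpAbove f X := by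
  by_contra hcon
  push_neg at hcon
  have hne : ∀ b : Ordinal, iterOrd f X b ≠ f (iterOrd f X b) := by
    intro b hb
    apply hcon b
    refine le_antisymm
      (iterOrd_le hf (lfpAbove_fixed hf hfi X).2 (lfpAbove_fixed hf hfi X).1.le b)
      (lfpAbove_le hf hfi ?_ hb.ge)
    simpa using iterOrd_mono hfi X (zero_le (a := b))
  have hlt : ∀ b : Ordinal, iterOrd f X b < iterOrd f X (Order.succ b) := by
    intro b
    rw [iterOrd_succ]
    exact lt_of_le_of_ne (hfi _) (hne b)
  have hsm : StrictMono (iterOrd f X) := fun b c h =>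
    (hlt b).trans_le (iterOrd_mono hfi X (Order.succ_le_of_lt h))
  exact not_injective_of_ordinal _ hsm.injective

end Aux

lemma comm_iter {α : Type*} [CompleteLattice α] {f g : α → α}
    (hf : Monotone f) (hg : Monotone g)
    (hfi : ∀ X : α, X ≤ f X)
    (hgc : ChainContinuous g)
    (hcomm : ∀ X : α, g (f X) ≤ f (g X)) :
    ∀ (b : Ordinal) (X : α), g (iterOrd f X b) ≤ iterOrd f (g X) b := by
  intro b
  induction b using Ordinal.limitRecOn with
  | zero => intro X; simp
  | add_one d ih =>
    rw [Ordinal.add_one_eq_succ] at *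
    intro X
    rw [iterOrd_succ, iterOrd_succ]
    exact (hcomm _).trans (hf (ih X))
  | limit o ho ih =>
    intro X
    rw [iterOrd_limit f X ho, iterOrd_limit f (g X) ho]
    set s : Set α := Set.range (fun b : {b : Ordinal // b < o} => iterOrd f X b)
      with hs
    have hchain : IsChain (· ≤ ·) s := by
      rintro _ ⟨b, rfl⟩ _ ⟨c, rfl⟩ _
      rcases le_total (b : Ordinal) c with h | h
      · exact Or.inl (iterOrd_mono hfi X h)
      · exact Or.inr (iterOrd_mono hfi X h)
    have hne : s.Nonempty := ⟨_, ⟨⟨0, ho.pos⟩, rfl⟩⟩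
    have : g (sSup s) = sSup (g '' s) := hgc s hchain hne
    rw [iSup, ← hs, this]
    apply sSup_le
    rintro _ ⟨_, ⟨b, rfl⟩, rfl⟩
    exact (ih b b.2 X).trans
      (le_iSup (fun b : {b : Ordinal // b < o} => iterOrd f (g X) b) b)


theorem stmt_6 {α : Type*} [CompleteLattice α] (f g : α → α)
    (hf : Monotone f) (hg : Monotone g)
    (hfi : ∀ X : α, X ≤ f X) (hgi : ∀ X : α, X ≤ g X)
    (hgc : ChainContinuous g)
    (hcomm : ∀ X : α, g (f X) ≤ f (g X)) :
    (∀ (b : Ordinal) (X : α), g (iterOrd f X b) ≤ iterOrd f (g X) b) ∧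
    (∀ X : α, g (lfpAbove f X) ≤ lfpAbove f (g X)) ∧
    lfpAbove (fun X => f X ⊔ g X) = fun X => lfpAbove f (lfpAbove g X) := by
  have part1 : ∀ (b : Ordinal) (X : α), g (iterOrd f X b) ≤ iterOrd f (g X) b :=
    fun b X => comm_iter hf hg hfi hgc hcomm b X
  have part2 : ∀ X : α, g (lfpAbove f X) ≤ lfpAbove f (g X) := by
    intro X
    obtain ⟨b, hb⟩ := exists_iterOrd_eq_lfpAbove hf hfi X
    rw [← hb]
    refine (part1 b X).trans (iterOrd_le hf ?_ ?_ b)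
    · exact (lfpAbove_fixed hf hfi (g X)).2
    · exact (lfpAbove_fixed hf hfi (g X)).1.le
  refine ⟨fun b X => comm_iter hf hg hfi hgc hcomm b X, part2, ?_⟩
  funext X
  set h : α → α := fun X => f X ⊔ g X with hh
  have hhm : Monotone h := fun a b hab => sup_le_sup (hf hab) (hg hab)
  have hhi : ∀ X : α, X ≤ h X := fun X => (hfi X).trans le_sup_left
  have hG := lfpAbove_fixed hg hgi X
  set G := lfpAbove g X with hGdef
  have hR := lfpAbove_fixed hf hfi G
  set R := lfpAbove f G with hRdef
  have hL := lfpAbove_fixed hhm hhi X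
  set L := lfpAbove h X with hLdef
  apply le_antisymm
  · -- L ≤ R : show R is a prefixedpoint of h above X
    have hgR : g R ≤ R := by
      have := part2 G
      rwa [hG.1, ← hRdef] at this
    refine lfpAbove_le hhm hhi ?_ ?_
    · exact hG.2.trans hR.2
    · exact sup_le hR.1.le hgR
  · -- R ≤ L
    have hfL : f L ≤ L := le_sup_left.trans hL.1.le
    have hgL : g L ≤ L := le_sup_right.trans hL.1.le
    have hGL : G ≤ L := lfpAbove_le hg hgi hL.2 hgL
    exact lfpAbove_le hf hfi hGL hfL
end

section
/- If g is a monotone increasing continuous function on a complete lattice, then its closure g* (the map sending X to the least fixedpoint of g above X) is also continuous, i.e., g* preserves suprema of increasing chains. -/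
lemma lfpAbove_le_s7 {α : Type*} [CompleteLattice α] (g : α → α) {X Y : α}
    (h1 : g Y = Y) (h2 : X ≤ Y) : lfpAbove g X ≤ Y :=
  sInf_le ⟨h1, h2⟩

lemma le_lfpAbove {α : Type*} [CompleteLattice α] (g : α → α) (X : α) :
    X ≤ lfpAbove g X :=
  le_sInf fun _ hY => hY.2

lemma lfpAbove_fixed_s7 {α : Type*} [CompleteLattice α] (g : α → α)
    (hg : Monotone g) (hgi : ∀ X : α, X ≤ g X) (X : α) :
    g (lfpAbove g X) = lfpAbove g X := by
  have hle : g (lfpAbove g X) ≤ lfpAbove g X := by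
    apply le_sInf
    intro Y hY
    calc g (lfpAbove g X) ≤ g Y := hg (sInf_le hY)
    _ = Y := hY.1
  exact le_antisymm hle (hgi _)

lemma lfpAbove_mono {α : Type*} [CompleteLattice α] (g : α → α) :
    Monotone (lfpAbove g) := by
  intro X X' h
  exact le_sInf fun Y hY => sInf_le ⟨hY.1, h.trans hY.2⟩

theorem stmt_7 {α : Type*} [CompleteLattice α] (g : α → α)
    (hg : Monotone g) (hgi : ∀ X : α, X ≤ g X) (hgc : ChainContinuous g) :
    ChainContinuous (lfpAbove g) := by
  intro s hs hne
  set T := sSup (lfpAbove g '' s) with hT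
  have himg : IsChain (· ≤ ·) (lfpAbove g '' s) := hs.image_of_map_rel _ _ _
    (fun _ _ h => lfpAbove_mono g h)
  have himgne : (lfpAbove g '' s).Nonempty := hne.image _
  have hfix : g T = T := by
    have h1 : g T = sSup (g '' (lfpAbove g '' s)) := hgc _ himg himgne
    have h2 : g '' (lfpAbove g '' s) = lfpAbove g '' s := by
      ext y
      constructor
      · rintro ⟨z, ⟨x, hx, rfl⟩, rfl⟩
        exact ⟨x, hx, (lfpAbove_fixed_s7 g hg hgi x).symm ▸ rfl⟩
      · rintro ⟨x, hx, rfl⟩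
        exact ⟨lfpAbove g x, ⟨x, hx, rfl⟩, lfpAbove_fixed_s7 g hg hgi x⟩
    rw [h1, h2]
  have hge : sSup s ≤ T :=
    sSup_le fun x hx => (le_lfpAbove g x).trans (le_sSup ⟨x, hx, rfl⟩)
  apply le_antisymm
  · exact lfpAbove_le_s7 g hfix hge
  · exact sSup_le (by rintro y ⟨x, hx, rfl⟩; exact lfpAbove_mono g (le_sSup hx))
end

section
/- Let f and g be monotone functions on a complete lattice such that f⁺ + g⁺ ≤ h⁺ ≤ f⁺ ∘ g⁺ pointwise for some monotone function h, and suppose g⁺ ∘ f* ≤ f* ∘ g⁺ pointwise. Then h⁺* = f* ∘ g*, where k* denotes the closure of k⁺ (least fixedpoint of k⁺ above the argument); in particular, for every X, the least fixedpoint of h above X (when iteration of h⁺ is used) equals lfp(f, lfp(g, X)) where lfp(k, Y) denotes the least fixedpoint of k above Y. -/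
/-- `k⁺(X) = k(X) ⊔ X`. -/
def fplus {α : Type*} [CompleteLattice α] (k : α → α) (X : α) : α := k X ⊔ X

lemma lfp_le_of {α : Type*} [CompleteLattice α] {k : α → α} {X Y : α}
    (h1 : k Y ≤ Y) (h2 : X ≤ Y) : lfpAbove (fplus k) X ≤ Y :=
  sInf_le ⟨by simp [fplus, sup_eq_right.mpr h1], h2⟩

lemma le_lfp {α : Type*} [CompleteLattice α] (k : α → α) (X : α) :
    X ≤ lfpAbove (fplus k) X :=
  le_sInf fun _ hY => hY.2

lemma lfp_prefix {α : Type*} [CompleteLattice α] {k : α → α} (hk : Monotone k) (X : α) :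
    k (lfpAbove (fplus k) X) ≤ lfpAbove (fplus k) X := by
  apply le_sInf
  intro Y hY
  calc k (lfpAbove (fplus k) X) ≤ k Y := hk (sInf_le hY)
    _ ≤ fplus k Y := le_sup_left
    _ = Y := hY.1

lemma lfp_fixed {α : Type*} [CompleteLattice α] {k : α → α} (hk : Monotone k) (X : α) :
    fplus k (lfpAbove (fplus k) X) = lfpAbove (fplus k) X :=
  sup_eq_right.mpr (lfp_prefix hk X)

theorem stmt_13 {α : Type*} [CompleteLattice α] (f g h : α → α)
    (hf : Monotone f) (hg : Monotone g) (hh : Monotone h)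
    (h1 : ∀ X : α, fplus f X ⊔ fplus g X ≤ fplus h X)
    (h2 : ∀ X : α, fplus h X ≤ fplus f (fplus g X))
    (h3 : ∀ X : α, fplus g (lfpAbove (fplus f) X) ≤ lfpAbove (fplus f) (fplus g X)) :
    lfpAbove (fplus h) = fun X => lfpAbove (fplus f) (lfpAbove (fplus g) X) := by
  funext X
  set G := lfpAbove (fplus g) X with hG
  set Y := lfpAbove (fplus f) G with hYdef
  set H := lfpAbove (fplus h) X with hH
  apply le_antisymm
  · -- H ≤ Y
    have hgY : fplus g Y ≤ Y := by
      calc fplus g Y ≤ lfpAbove (fplus f) (fplus g G) := h3 G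
        _ = Y := by rw [lfp_fixed hg X]
    have hfY : f Y ≤ Y := lfp_prefix hf G
    have hhY : h Y ≤ Y := by
      have := h2 Y
      calc h Y ≤ fplus h Y := le_sup_left
        _ ≤ fplus f (fplus g Y) := h2 Y
        _ ≤ fplus f Y := by
            simp only [fplus]
            exact sup_le (le_sup_of_le_left (hf hgY)) (hgY.trans le_sup_right)
        _ ≤ Y := sup_le hfY le_rfl
    exact lfp_le_of hhY (le_trans (le_lfp g X) (le_lfp f G))
  · -- Y ≤ H
    have hhH : fplus h H = H := lfp_fixed hh X
    have hfH : f H ≤ H := by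
      calc f H ≤ fplus f H ⊔ fplus g H := le_sup_of_le_left le_sup_left
        _ ≤ fplus h H := h1 H
        _ = H := hhH
    have hgH : g H ≤ H := by
      calc g H ≤ fplus f H ⊔ fplus g H := le_sup_of_le_right le_sup_left
        _ ≤ fplus h H := h1 H
        _ = H := hhH
    have hGH : G ≤ H := lfp_le_of hgH (le_lfp h X)
    exact lfp_le_of hfH hGH
end
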